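/- arXiv:2509.00506 — 3 statements merged into one kernel-verified Lean document; each statement's English description precedes it below -/
import Mathlib

section
/- If T: V → [k] ∪ {k+1} satisfies the discrete average property, then its complement T': V → [k] ∪ {k+1}, defined by T'(v) = (k+1) ⊖ T(v), also satisfies the discrete average property (with the roles of the maximizing and minimizing neighbors exchanged). -/
/-- `ℕ*`: natural numbers with an optional advantage marker `*`.
`(n, false)` is the plain number `n`; `(n, true)` is `n*`. -/
abbrev NStar := ℕ × Bool

/-- The advantage-aware addition `⊕` on `ℕ*`. -/
def oplus : NStar → NStar → NStar
  | (x, false), (y, false) => (x + y, false)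
  | (x, true),  (y, false) => (x + y, true)
  | (x, false), (y, true)  => (x + y, true)
  | (x, true),  (y, true)  => (x + y + 1, false)

/-- The advantage-aware (truncated) subtraction `⊖` on `ℕ*`. -/
def ominus : NStar → NStar → NStar
  | (x, false), (y, false) => (x - y, false)
  | (x, true),  (y, false) => (x - y, true)
  | (x, false), (y, true)  => (x - y - 1, true)
  | (x, true),  (y, true)  => (x - y, false)

/-- Encoding of `ℕ*` into `ℕ`: `n ↦ 2n`, `n* ↦ 2n+1`. -/
def encodeN : NStar → ℕ := fun p => 2 * p.1 + (if p.2 then 1 else 0)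

/-- The order `≺` on `ℕ*`: `0 ≺ 0* ≺ 1 ≺ 1* ≺ ⋯`. -/
def nlt (x y : NStar) : Prop := encodeN x < encodeN y

/-- The order `⪯` on `ℕ*`. -/
def nle (x y : NStar) : Prop := encodeN x ≤ encodeN y

/-- Successor with respect to the order `≺` on `ℕ*`. -/
def nsucc : NStar → NStar
  | (n, false) => (n, true)
  | (n, true)  => (n + 1, false)

/-- Predecessor with respect to the order `≺` on `ℕ*` (`pred 0 = 0`). -/
def npred : NStar → NStar
  | (n, true)      => (n, false)
  | (0, false)     => (0, false)
  | (n + 1, false) => (n, true)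


/-- The discrete average value `⌊(s)/2⌋ + ε` from the average property, where
`s = |T(v⁺)| + |T(v⁻)|` and the second argument is `T(v⁻)` (whose advantage
status determines `ε`): `ε = 0` if `s` is even and `T(v⁻) ∈ ℕ`; `ε = 1` if `s`
is odd and `T(v⁻) ∈ ℕ* \\ ℕ`; `ε = *` otherwise. -/
def avgEps (s : ℕ) (tminus : NStar) : NStar :=
  if s % 2 = 0 ∧ tminus.2 = false then (s / 2, false)
  else if s % 2 = 1 ∧ tminus.2 = true then (s / 2 + 1, false)
  else (s / 2, true)

/-- The bid `b^T(v)`: `T(v) ⊖ T(v⁻)` if `T(v⁻) ∈ ℕ`, and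
`T(v) ⊖ (|T(v⁻)| + 1)` otherwise, where `vm` chooses the minimizing neighbor. -/
def bidT {V : Type*} (T : V → NStar) (vm : V → V) (v : V) : NStar :=
  if (T (vm v)).2 = false then ominus (T v) (T (vm v))
  else ominus (T v) ((T (vm v)).1 + 1, false)

/-!
Under the encoding `n ↦ 2n`, `n* ↦ 2n + 1` of `ℕ*` into `ℕ`, the complement `x ↦ (m, false) ⊖ x`
becomes `X ↦ 2m - X` and keeps the marker `*`, while the discrete average of `x` (the maximum) and
`y` (the minimum) encodes to `(X + Y + q - p) / 2`, where `p`, `q` are the markers of `x`, `y`.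
Replacing `X`, `Y` by `2m - X`, `2m - Y` and exchanging the roles of `x` and `y` turns this into
`2m` minus itself, which is the claimed identity; the order statements hold as `X ↦ 2m - X` is
antitone.
-/

lemma encodeN_injective : Function.Injective encodeN := by
  rintro ⟨a, p⟩ ⟨b, q⟩ h
  cases p <;> cases q <;> simp [encodeN] at h <;> simp <;> omega

lemma encodeN_avgEps (s : ℕ) (y : NStar) :
    encodeN (avgEps s y) = s + if y.2 then 1 else 0 := by
  obtain ⟨b, q⟩ := y
  cases q <;> unfold avgEps <;> split_ifs <;> simp [encodeN] at * <;> omega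

section Complement

variable {m : ℕ} {x y : NStar}

lemma ominus_snd : (ominus (m, false) x).2 = x.2 := by
  obtain ⟨a, p⟩ := x
  cases p <;> rfl

lemma encodeN_ominus (hx : nle x (m, false)) :
    encodeN (ominus (m, false) x) = 2 * m - encodeN x := by
  obtain ⟨a, p⟩ := x
  cases p <;> simp [nle, encodeN, ominus] at hx ⊢ <;> omega

lemma ominus_antitone (hxy : nle x y) (hy : nle y (m, false)) :
    nle (ominus (m, false) y) (ominus (m, false) x) := by
  have hx : nle x (m, false) := le_trans hxy hy
  unfold nle at *
  rw [encodeN_ominus hx, encodeN_ominus hy]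
  omega

lemma ominus_avgEps (hx : nle x (m, false)) (hy : nle y (m, false)) :
    ominus (m, false) (avgEps (x.1 + y.1) y) =
      avgEps ((ominus (m, false) y).1 + (ominus (m, false) x).1) (ominus (m, false) x) := by
  have havg : nle (avgEps (x.1 + y.1) y) (m, false) := by
    unfold nle at *
    rw [encodeN_avgEps]
    obtain ⟨a, p⟩ := x
    obtain ⟨b, q⟩ := y
    cases p <;> cases q <;> simp [encodeN] at hx hy ⊢ <;> omega
  apply encodeN_injective
  rw [encodeN_ominus havg, encodeN_avgEps, encodeN_avgEps, ominus_snd]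
  have hx' := encodeN_ominus hx
  have hy' := encodeN_ominus hy
  obtain ⟨a, p⟩ := x
  obtain ⟨b, q⟩ := y
  cases p <;> cases q <;> simp [nle, encodeN, ominus] at hx hy hx' hy' ⊢ <;> omega

end Complement

theorem complement_average_general {V : Type*} (E : V → V → Prop) (k : ℕ)
    (T : V → NStar) (hrange : ∀ v, nle (T v) ((k + 1 : ℕ), false))
    (vp vm : V → V)
    (hvp : ∀ v, ∀ u, E v u → nle (T u) (T (vp v)))
    (hvm : ∀ v, ∀ u, E v u → nle (T (vm v)) (T u))
    (havg : ∀ v, T v = avgEps ((T (vp v)).1 + (T (vm v)).1) (T (vm v))) :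
    ∀ v : V,
      (∀ u, E v u →
        nle (ominus ((k + 1 : ℕ), false) (T u))
            (ominus ((k + 1 : ℕ), false) (T (vm v)))) ∧
      (∀ u, E v u →
        nle (ominus ((k + 1 : ℕ), false) (T (vp v)))
            (ominus ((k + 1 : ℕ), false) (T u))) ∧
      ominus ((k + 1 : ℕ), false) (T v) =
        avgEps ((ominus ((k + 1 : ℕ), false) (T (vm v))).1 +
                (ominus ((k + 1 : ℕ), false) (T (vp v))).1)
          (ominus ((k + 1 : ℕ), false) (T (vp v))) := by
  intro v
  refine ⟨fun u hu => ominus_antitone (hvm v u hu) (hrange u),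
    fun u hu => ominus_antitone (hvp v u hu) (hrange (vp v)), ?_⟩
  rw [havg v]
  exact ominus_avgEps (hrange (vp v)) (hrange (vm v))

/-- if `T : V → [k] ∪ {k+1}` satisfies the discrete average
property, its complement `T'(v) = (k+1) ⊖ T(v)` also satisfies the discrete
average property, with the roles of the maximizing and minimizing neighbors
exchanged. -/
theorem complement_average {V : Type*} [Fintype V] (E : V → V → Prop) (k : ℕ)
    (hout : ∀ v : V, ∃ u, E v u)
    (T : V → NStar) (hrange : ∀ v, nle (T v) ((k + 1 : ℕ), false))
    (vp vm : V → V)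
    (hvpE : ∀ v, E v (vp v)) (hvmE : ∀ v, E v (vm v))
    (hvp : ∀ v, ∀ u, E v u → nle (T u) (T (vp v)))
    (hvm : ∀ v, ∀ u, E v u → nle (T (vm v)) (T u))
    (havg : ∀ v, T v = avgEps ((T (vp v)).1 + (T (vm v)).1) (T (vm v))) :
    ∀ v : V,
      (∀ u, E v u →
        nle (ominus ((k + 1 : ℕ), false) (T u))
            (ominus ((k + 1 : ℕ), false) (T (vm v)))) ∧
      (∀ u, E v u →
        nle (ominus ((k + 1 : ℕ), false) (T (vp v)))
            (ominus ((k + 1 : ℕ), false) (T u))) ∧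
      ominus ((k + 1 : ℕ), false) (T v) =
        avgEps ((ominus ((k + 1 : ℕ), false) (T (vm v))).1 +
                (ominus ((k + 1 : ℕ), false) (T (vp v))).1)
          (ominus ((k + 1 : ℕ), false) (T (vp v))) :=
  complement_average_general E k T hrange vp vm hvp hvm havg
end

section
/- The energy thresholds μ_n of truncated energy bidding games are antitone in the budget: for every n ≥ 0, every vertex v, and budgets B₁ ⪰ B₂ in [k], one has μ_n(v, B₁) ≤ μ_n(v, B₂). -/
/-!
Raising the budget from `B` to `B + d` lets Preserver bid `b + d` instead of `b`: upon winning
he is left with the same budget `B - b`, and upon losing he receives at least as large a budget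
as before, since `b ≤ trumpE B b ≤ b + 1`. By induction on `n`, larger budgets need less energy,
so every outcome of the shifted bid costs at most as much as that of `b`.
-/

/-- An energy discrete-bidding game: a finite graph with nonempty neighbor
sets, total budget `k`, and integer edge weights. Budgets are encoded as
natural numbers via `n ↦ 2n`, `n* ↦ 2n+1`, so the budget set `[k]` is
`{0, 1, ..., 2k+1}`, `⊕` is `+`, `⊖` is truncated subtraction, and `succ`
is `+1`. -/
structure EGame (V : Type*) where
  /-- neighbors -/
  N : V → Finset V
  /-- every vertex has an outgoing edge -/
  hN : ∀ v, (N v).Nonempty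
  /-- total budget -/
  k : ℕ
  /-- edge weights -/
  w : V → V → ℤ

/-- The minimal bid (in the encoding) by which Consumer trumps Preserver's bid
`b` when Preserver's budget is `B`: `b` itself if Preserver holds but does not
use the advantage, and `succ b` otherwise. -/
def trumpE (B b : ℕ) : ℕ := if B % 2 = 1 ∧ b % 2 = 0 then b else b + 1

variable {V : Type*}

/-- The energy Preserver needs upon winning the bidding with `b`. -/
def Ewin (G : EGame V) (m : V → ℕ → ℕ) (v : V) (B b : ℕ) : ℕ :=
  (G.N v).inf' (G.hN v) fun v' => ((m v' (B - b) : ℤ) - G.w v v').toNat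

/-- The energy Preserver needs upon losing the bidding with `b`. -/
def Elose (G : EGame V) (m : V → ℕ → ℕ) (v : V) (B b : ℕ) : ℕ :=
  (G.N v).sup' (G.hN v) fun v' => ((m v' (B + trumpE B b) : ℤ) - G.w v v').toNat

/-- The energy Preserver needs when bidding `b`. -/
def Enext (G : EGame V) (m : V → ℕ → ℕ) (v : V) (B b : ℕ) : ℕ :=
  if B + trumpE B b ≤ 2 * G.k + 1 then max (Ewin G m v B b) (Elose G m v B b)
  else Ewin G m v B b

/-- The energy threshold `μ_n(v, B)` of the `n`-turn truncated game. -/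
def muN (G : EGame V) : ℕ → V → ℕ → ℕ
  | 0 => fun _ _ => 0
  | n + 1 => fun v B =>
      (Finset.range (B + 1)).inf' ⟨0, by simp⟩ fun b => Enext G (muN G n) v B b

theorem le_trumpE (B b : ℕ) : b ≤ trumpE B b := by
  unfold trumpE; split <;> omega

theorem trumpE_le_succ (B b : ℕ) : trumpE B b ≤ b + 1 := by
  unfold trumpE; split <;> omega

theorem add_trumpE_le_add_trumpE_add_add (B b d : ℕ) :
    B + trumpE B b ≤ B + d + trumpE (B + d) (b + d) := by
  rcases Nat.eq_zero_or_pos d with rfl | hd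
  · rfl
  have := trumpE_le_succ B b
  have := le_trumpE (B + d) (b + d)
  omega

section

variable (G : EGame V) {m : V → ℕ → ℕ}

theorem Ewin_add_add (v : V) (B b d : ℕ) :
    Ewin G m v (B + d) (b + d) = Ewin G m v B b := by
  simp only [Ewin, Nat.add_sub_add_right]

theorem Elose_add_add_le (hm : ∀ v, Antitone (m v)) (v : V) (B b d : ℕ) :
    Elose G m v (B + d) (b + d) ≤ Elose G m v B b := by
  refine Finset.sup'_mono_fun fun v' _ => Int.toNat_le_toNat ?_
  have := hm v' (add_trumpE_le_add_trumpE_add_add B b d)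
  omega

theorem Enext_add_add_le (hm : ∀ v, Antitone (m v)) (v : V) (B b d : ℕ) :
    Enext G m v (B + d) (b + d) ≤ Enext G m v B b := by
  unfold Enext
  rw [Ewin_add_add]
  split_ifs with hshift h
  · exact max_le_max le_rfl (Elose_add_add_le G hm v B b d)
  · exact absurd ((add_trumpE_le_add_trumpE_add_add B b d).trans hshift) h
  · exact le_max_left _ _
  · exact le_rfl

theorem muN_antitone (n : ℕ) (v : V) : Antitone (muN G n v) := by
  induction n generalizing v with
  | zero => exact fun _ _ _ => le_rfl
  | succ n ih =>
    intro B B' hB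
    obtain ⟨d, rfl⟩ := Nat.exists_eq_add_of_le hB
    simp only [muN]
    refine Finset.le_inf' _ _ fun b hb => ?_
    have hbd : b + d ∈ Finset.range (B + d + 1) := by
      simp only [Finset.mem_range] at hb ⊢; omega
    exact (Finset.inf'_le _ hbd).trans (Enext_add_add_le G ih v B b d)

end

/-- the truncated energy thresholds are antitone in the budget:
for budgets `B₁ ⪰ B₂` in `[k]`, `μ_n(v, B₁) ≤ μ_n(v, B₂)`. -/
theorem muN_antitone_budget {V : Type*} (G : EGame V) :
    ∀ (n : ℕ) (v : V) (B₁ B₂ : ℕ), B₁ ≤ 2 * G.k + 1 → B₂ ≤ B₁ →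
      muN G n v B₁ ≤ muN G n v B₂ :=
  fun n v _ _ _ hB => muN_antitone G n v hB
end

section
/- Suppose an infinite sequence of configurations c_0, c_1, ... with weights w_i ∈ [−W, W] satisfies: within each of at most k+1 patches, the invariant e(c_i) + w_i ≥ e(c_{i+1}) holds for a nonnegative function e bounded by E_max, while at most k transition edges occur between patches. Then an initial energy of M = (k+1)·(W + E_max) suffices to keep the accumulated energy nonnegative in every prefix: M + Σ_{t<m} w_t ≥ 0 for all m. -/
/-!
Subtract `(W + Emax)` per patch already entered from the energy `e (c i)`. Inside a patch
this potential drops by at most `w i`; when the patch index grows, the potential falls by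
at least `W + Emax`, which pays for any change of `e` together with a weight `≥ -W`. Hence
the potential never drops by more than the accumulated weight, and it ranges between
`-k (W + Emax)` and `Emax`.
-/

theorem sub_le_sum_range_of_le_add {α : Type*} [AddCommGroup α] [PartialOrder α]
    [IsOrderedAddMonoid α] {f w : ℕ → α} (h : ∀ i, f (i + 1) ≤ f i + w i) (m : ℕ) :
    f m - f 0 ≤ ∑ t ∈ Finset.range m, w t := by
  rw [← Finset.sum_range_sub]
  exact Finset.sum_le_sum fun i _ => sub_le_iff_le_add'.mpr (h i)

section PatchPotential

variable {W Emax : ℕ} {E p : ℕ → ℕ}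

def patchPotential (W Emax : ℕ) (E p : ℕ → ℕ) (i : ℕ) : ℤ :=
  E i - p i * (W + Emax)

theorem patchPotential_succ_le {w : ℕ → ℤ} (hE : ∀ i, E i ≤ Emax) (hw : ∀ i, -(W : ℤ) ≤ w i)
    (hp : Monotone p) (hstep : ∀ i, p i = p (i + 1) → (E (i + 1) : ℤ) ≤ E i + w i) (i : ℕ) :
    patchPotential W Emax E p (i + 1) ≤ patchPotential W Emax E p i + w i := by
  unfold patchPotential
  rcases (hp i.le_succ).eq_or_lt with hsame | hnext
  · rw [← hsame]
    linarith [hstep i hsame]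
  · have hp_succ : (p i : ℤ) + 1 ≤ p (i + 1) := by exact_mod_cast hnext
    have hE_succ : (E (i + 1) : ℤ) ≤ Emax := by exact_mod_cast hE (i + 1)
    nlinarith [hw i, (E i).cast_nonneg (α := ℤ), W.cast_nonneg (α := ℤ), Emax.cast_nonneg (α := ℤ)]

theorem neg_mul_le_patchPotential {k : ℕ} (hpk : ∀ i, p i ≤ k) (i : ℕ) :
    -((k : ℤ) * (W + Emax)) ≤ patchPotential W Emax E p i := by
  have hp_le : (p i : ℤ) ≤ k := by exact_mod_cast hpk i
  unfold patchPotential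
  nlinarith [(E i).cast_nonneg (α := ℤ), W.cast_nonneg (α := ℤ), Emax.cast_nonneg (α := ℤ)]

theorem patchPotential_le (hE : ∀ i, E i ≤ Emax) (i : ℕ) :
    patchPotential W Emax E p i ≤ Emax := by
  have hE_i : (E i : ℤ) ≤ Emax := by exact_mod_cast hE i
  unfold patchPotential
  nlinarith [(p i).cast_nonneg (α := ℤ), W.cast_nonneg (α := ℤ), Emax.cast_nonneg (α := ℤ)]

end PatchPotential

/-- energy bookkeeping across patches. If the indices are
grouped by a monotone patch function `p` with at most `k+1` values, within
each patch the invariant `e(c_{i+1}) ≤ e(c_i) + w_i` holds for a potential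
`e ≤ Emax`, and all weights satisfy `|w_i| ≤ W`, then the initial energy
`M = (k+1) · (W + Emax)` keeps every partial sum nonnegative. -/
theorem energy_bookkeeping {C : Type*} (k W Emax : ℕ)
    (c : ℕ → C) (w : ℕ → ℤ) (e : C → ℕ)
    (hE : ∀ x : C, e x ≤ Emax)
    (hw : ∀ i : ℕ, |w i| ≤ (W : ℤ))
    (p : ℕ → ℕ) (hp : Monotone p) (hpk : ∀ i, p i ≤ k)
    (hstep : ∀ i : ℕ, p i = p (i + 1) →
      (e (c (i + 1)) : ℤ) ≤ (e (c i) : ℤ) + w i) :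
    ∀ m : ℕ, 0 ≤ (((k + 1) * (W + Emax) : ℕ) : ℤ) +
      ∑ t ∈ Finset.range m, w t := by
  intro m
  have hE' : ∀ i, (e ∘ c) i ≤ Emax := fun i => hE (c i)
  have hsum := sub_le_sum_range_of_le_add
    (patchPotential_succ_le hE' (fun i => (abs_le.mp (hw i)).1) hp hstep) m
  have hlow := neg_mul_le_patchPotential (W := W) (Emax := Emax) (E := e ∘ c) hpk m
  have hhigh := patchPotential_le (W := W) (p := p) hE' 0
  push_cast
  linarith [W.cast_nonneg (α := ℤ)]
end
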